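/- arXiv:1401.7511 — 2 statements merged into one kernel-verified Lean document; each statement's English description precedes it below -/
import Mathlib

section
/- Let G be a connected simple graph with n ≥ 3 vertices. Then (1536/343) · X(G) ≤ AZI(G) ≤ (√((n−1)¹³)/(√32 · (n−2)³)) · X(G), with equality on the left if and only if G is isomorphic to the star K_{1,8}, and equality on the right if and only if G is isomorphic to the complete graph Kₙ. -/
open Finset SimpleGraph

variable {V : Type*} [Fintype V] [DecidableEq V]

/-- The sum-connectivity index `X(G) = Σ_{uv ∈ E(G)} 1/√(d_u + d_v)`. -/
noncomputable def sumConnIndex (G : SimpleGraph V) [DecidableRel G.Adj] : ℝ :=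
  ∑ e ∈ G.edgeFinset, Sym2.lift
    ⟨fun u v => 1 / Real.sqrt ((G.degree u : ℝ) + (G.degree v : ℝ)),
     fun u v => by dsimp only; rw [add_comm ((G.degree u : ℝ)) ((G.degree v : ℝ))]⟩ e

/-- The Randić index `R(G) = Σ_{uv ∈ E(G)} 1/√(d_u d_v)`. -/
noncomputable def randicIndex (G : SimpleGraph V) [DecidableRel G.Adj] : ℝ :=
  ∑ e ∈ G.edgeFinset, Sym2.lift
    ⟨fun u v => 1 / Real.sqrt ((G.degree u : ℝ) * (G.degree v : ℝ)),
     fun u v => by dsimp only; rw [mul_comm ((G.degree u : ℝ)) ((G.degree v : ℝ))]⟩ e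

/-- The harmonic index `H(G) = Σ_{uv ∈ E(G)} 2/(d_u + d_v)`. -/
noncomputable def harmonicIndex (G : SimpleGraph V) [DecidableRel G.Adj] : ℝ :=
  ∑ e ∈ G.edgeFinset, Sym2.lift
    ⟨fun u v => 2 / ((G.degree u : ℝ) + (G.degree v : ℝ)),
     fun u v => by dsimp only; rw [add_comm ((G.degree u : ℝ)) ((G.degree v : ℝ))]⟩ e

/-- The atom-bond connectivity index `ABC(G) = Σ_{uv ∈ E(G)} √((d_u + d_v − 2)/(d_u d_v))`. -/
noncomputable def abcIndex (G : SimpleGraph V) [DecidableRel G.Adj] : ℝ :=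
  ∑ e ∈ G.edgeFinset, Sym2.lift
    ⟨fun u v => Real.sqrt (((G.degree u : ℝ) + (G.degree v : ℝ) - 2) /
        ((G.degree u : ℝ) * (G.degree v : ℝ))),
     fun u v => by dsimp only; rw [add_comm ((G.degree u : ℝ)) ((G.degree v : ℝ)),
        mul_comm ((G.degree u : ℝ)) ((G.degree v : ℝ))]⟩ e

/-- The first geometric-arithmetic index `GA(G) = Σ_{uv ∈ E(G)} 2√(d_u d_v)/(d_u + d_v)`. -/
noncomputable def geoArithIndex (G : SimpleGraph V) [DecidableRel G.Adj] : ℝ :=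
  ∑ e ∈ G.edgeFinset, Sym2.lift
    ⟨fun u v => 2 * Real.sqrt ((G.degree u : ℝ) * (G.degree v : ℝ)) /
        ((G.degree u : ℝ) + (G.degree v : ℝ)),
     fun u v => by dsimp only; rw [mul_comm ((G.degree u : ℝ)) ((G.degree v : ℝ)),
        add_comm ((G.degree u : ℝ)) ((G.degree v : ℝ))]⟩ e

/-- The augmented Zagreb index `AZI(G) = Σ_{uv ∈ E(G)} (d_u d_v/(d_u + d_v − 2))³`. -/
noncomputable def augZagrebIndex (G : SimpleGraph V) [DecidableRel G.Adj] : ℝ :=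
  ∑ e ∈ G.edgeFinset, Sym2.lift
    ⟨fun u v => ((G.degree u : ℝ) * (G.degree v : ℝ) /
        ((G.degree u : ℝ) + (G.degree v : ℝ) - 2)) ^ 3,
     fun u v => by dsimp only; rw [mul_comm ((G.degree u : ℝ)) ((G.degree v : ℝ)),
        add_comm ((G.degree u : ℝ)) ((G.degree v : ℝ))]⟩ e

/-- The modified second Zagreb index `M₂*(G) = Σ_{uv ∈ E(G)} 1/(d_u d_v)`. -/
noncomputable def modSecondZagrebIndex (G : SimpleGraph V) [DecidableRel G.Adj] : ℝ :=
  ∑ e ∈ G.edgeFinset, Sym2.lift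
    ⟨fun u v => 1 / ((G.degree u : ℝ) * (G.degree v : ℝ)),
     fun u v => by dsimp only; rw [mul_comm ((G.degree u : ℝ)) ((G.degree v : ℝ))]⟩ e

/-!
On every edge `uv` the ratio of the two summands, `(d_u d_v/(d_u + d_v - 2))³ · √(d_u + d_v)`,
lies between the two constants, so both bounds hold termwise and equality in a bound forces
equality on every edge.

For the lower bound: if both degrees are at least 2 then `d_u d_v/(d_u + d_v - 2) ≥ 2`, so the
ratio is at least `8 > 1536/343`. If `d_u = 1` the ratio is `(d/(d - 1))³ √(d + 1)` with
`d = d_v`; over the integers `d ≥ 2` it is minimal exactly at `d = 8`, where it equals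
`(8/7)³ · 3 = 1536/343` (for `d > 20` already `√(d + 1)` exceeds the constant).

For the upper bound, with `m = n - 1 ≥ d_u, d_v`: `d_u d_v/(d_u + d_v - 2) ≤ m²/(2(m - 1))` and
`d_u + d_v ≤ 2m`, both with equality iff `d_u = d_v = m`, and the constant is
`(m²/(2(m - 1)))³ √(2m)`.

A connected graph all of whose edges join a vertex of degree 1 to one of degree 8 is the star
`K_{1,8}`; one all of whose edges join vertices of degree `n - 1` is `Kₙ`.
-/

lemma le_and_eq_iff_of_lt_of_eq {α : Type*} [Preorder α] {x y : α} {P : Prop}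
    (hlt : ¬P → x < y) (heq : P → x = y) : x ≤ y ∧ (x = y ↔ P) := by
  by_cases hP : P
  · exact ⟨(heq hP).le, iff_of_true (heq hP) hP⟩
  · exact ⟨(hlt hP).le, iff_of_false (hlt hP).ne hP⟩

lemma mul_one_div_sqrt_lt_iff {c s y : ℝ} (hc : 0 ≤ c) (hs : 0 < s) (hy : 0 ≤ y) :
    c * (1 / √s) < y ↔ c ^ 2 < y ^ 2 * s := by
  rw [mul_one_div, div_lt_iff₀ (Real.sqrt_pos.mpr hs), ← Real.sqrt_sq hy,
    ← Real.sqrt_mul (sq_nonneg y), Real.sqrt_sq hy, Real.lt_sqrt hc]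

lemma two_le_mul_div_add_sub_two {a b : ℝ} (ha : 2 ≤ a) (hb : 2 ≤ b) :
    2 ≤ a * b / (a + b - 2) := by
  rw [le_div_iff₀ (by linarith)]
  nlinarith [mul_nonneg (sub_nonneg.2 ha) (sub_nonneg.2 hb)]

lemma mul_div_add_sub_two_le {a b m : ℝ} (ha : 1 ≤ a) (ham : a ≤ m) (hb : 2 ≤ b) (hbm : b ≤ m) :
    a * b / (a + b - 2) ≤ m ^ 2 / (2 * (m - 1)) := by
  have hm : 0 < m - 1 := by linarith
  rw [div_le_div_iff₀ (by linarith) (by positivity)]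
  -- `(m - 1) * (m ^ 2 * (a + b - 2) - a * b * (2 * (m - 1)))` is the sum of the three products
  nlinarith [mul_nonneg (mul_nonneg (sub_nonneg.2 ham) (sub_nonneg.2 hb))
      (add_nonneg (sq_nonneg (m - 1)) zero_le_one),
    mul_nonneg (sub_nonneg.2 ham) (sq_nonneg (m - 2)),
    mul_nonneg (mul_nonneg (mul_nonneg (sub_nonneg.2 ha) (by linarith : (0 : ℝ) ≤ m))
      (by linarith : (0 : ℝ) ≤ m - 2)) (sub_nonneg.2 hbm)]

lemma natCast_mul_div_add_sub_two_le {a b : ℕ} {m : ℝ} (ha : 1 ≤ a) (hb : 1 ≤ b)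
    (hab : 3 ≤ a + b) (ham : (a : ℝ) ≤ m) (hbm : (b : ℝ) ≤ m) :
    (a : ℝ) * b / (a + b - 2) ≤ m ^ 2 / (2 * (m - 1)) := by
  rcases le_or_gt 2 b with hb2 | hb2
  · exact mul_div_add_sub_two_le (by exact_mod_cast ha) ham (by exact_mod_cast hb2) hbm
  · rw [mul_comm (a : ℝ), add_comm (a : ℝ)]
    exact mul_div_add_sub_two_le (by exact_mod_cast hb) hbm
      (by exact_mod_cast (by omega : 2 ≤ a)) ham

lemma sqrt_pow_thirteen_div_eq (m : ℝ) :
    √(m ^ 13) / (√32 * (m - 1) ^ 3) = (m ^ 2 / (2 * (m - 1))) ^ 3 * √(2 * m) := by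
  have h13 : √(m ^ 13) = m ^ 6 * √m := by
    rw [show m ^ 13 = (m ^ 6) ^ 2 * m by ring, Real.sqrt_mul (by positivity),
      Real.sqrt_sq (by positivity)]
  have h32 : √32 = 4 * √2 := by
    rw [show (32 : ℝ) = 4 ^ 2 * 2 by norm_num, Real.sqrt_mul (by positivity),
      Real.sqrt_sq (by norm_num)]
  rw [h13, h32, Real.sqrt_mul zero_le_two]
  rcases eq_or_ne (m - 1) 0 with h | h
  · simp [h]
  · field_simp
    rw [Real.sq_sqrt zero_le_two]
    ring

lemma lower_const_sq_lt {d : ℕ} (hd : 2 ≤ d) (h8 : d ≠ 8) :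
    (1536 / 343 : ℝ) ^ 2 < ((d / (d - 1) : ℝ) ^ 3) ^ 2 * (d + 1) := by
  rcases le_or_gt d 20 with hd20 | hd20
  · interval_cases d <;> first | exact absurd rfl h8 | norm_num
  · have hd' : (21 : ℝ) ≤ d := by exact_mod_cast hd20
    have h1 : 1 ≤ (d / (d - 1) : ℝ) := by rw [one_le_div (by linarith)]; linarith
    have h2 : 1 ≤ ((d / (d - 1) : ℝ) ^ 3) ^ 2 := one_le_pow₀ (one_le_pow₀ h1)
    nlinarith

lemma lower_edge_lt {a b : ℕ} (ha : 1 ≤ a) (hb : 1 ≤ b) (hab : 3 ≤ a + b)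
    (h : ¬((a = 1 ∧ b = 8) ∨ (a = 8 ∧ b = 1))) :
    1536 / 343 * (1 / √((a : ℝ) + b)) < ((a : ℝ) * b / (a + b - 2)) ^ 3 := by
  wlog hba : b ≤ a generalizing a b
  · rw [add_comm (a : ℝ), mul_comm (a : ℝ)]
    exact this hb ha (by omega) (by tauto) (by omega)
  rcases eq_or_lt_of_le hb with rfl | hb2
  · have ha' : (1 : ℝ) ≤ a - 1 := by
      have : (2 : ℝ) ≤ a := by exact_mod_cast (by omega : 2 ≤ a)
      linarith
    rw [Nat.cast_one, mul_one, show (a : ℝ) + 1 - 2 = a - 1 by ring,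
      mul_one_div_sqrt_lt_iff (by norm_num) (by linarith) (by positivity)]
    exact lower_const_sq_lt (by omega) (by omega)
  have ha' : (2 : ℝ) ≤ a := by exact_mod_cast (by omega : 2 ≤ a)
  have hb' : (2 : ℝ) ≤ b := by exact_mod_cast hb2
  have hs : 1 ≤ √((a : ℝ) + b) := Real.one_le_sqrt.mpr (by linarith)
  calc 1536 / 343 * (1 / √((a : ℝ) + b)) ≤ 1536 / 343 * 1 := by
        gcongr; exact div_le_one_of_le₀ hs (by positivity)
    _ < 2 ^ 3 := by norm_num
    _ ≤ ((a : ℝ) * b / (a + b - 2)) ^ 3 := by gcongr; exact two_le_mul_div_add_sub_two ha' hb'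

lemma lower_edge_le_and_eq_iff {a b : ℕ} (ha : 1 ≤ a) (hb : 1 ≤ b) (hab : 3 ≤ a + b) :
    1536 / 343 * (1 / √((a : ℝ) + b)) ≤ ((a : ℝ) * b / (a + b - 2)) ^ 3 ∧
    (1536 / 343 * (1 / √((a : ℝ) + b)) = ((a : ℝ) * b / (a + b - 2)) ^ 3 ↔
      (a = 1 ∧ b = 8) ∨ (a = 8 ∧ b = 1)) := by
  refine le_and_eq_iff_of_lt_of_eq (lower_edge_lt ha hb hab) ?_
  have h9 : √9 = 3 := by rw [show (9 : ℝ) = 3 ^ 2 by norm_num, Real.sqrt_sq (by norm_num)]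
  rintro (⟨rfl, rfl⟩ | ⟨rfl, rfl⟩) <;> norm_num [h9]

lemma upper_edge_le_and_eq_iff {a b n : ℕ} (ha : 1 ≤ a) (hb : 1 ≤ b) (hab : 3 ≤ a + b)
    (han : a < n) (hbn : b < n) :
    ((a : ℝ) * b / (a + b - 2)) ^ 3 ≤
      √(((n : ℝ) - 1) ^ 13) / (√32 * ((n : ℝ) - 2) ^ 3) * (1 / √((a : ℝ) + b)) ∧
    (((a : ℝ) * b / (a + b - 2)) ^ 3 =
        √(((n : ℝ) - 1) ^ 13) / (√32 * ((n : ℝ) - 2) ^ 3) * (1 / √((a : ℝ) + b)) ↔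
      a = n - 1 ∧ b = n - 1) := by
  have cast_pred : ((n - 1 : ℕ) : ℝ) = n - 1 := by rw [Nat.cast_sub (by omega), Nat.cast_one]
  set m : ℝ := n - 1
  have ham : (a : ℝ) ≤ m := by rw [← cast_pred]; exact_mod_cast (by omega : a ≤ n - 1)
  have hbm : (b : ℝ) ≤ m := by rw [← cast_pred]; exact_mod_cast (by omega : b ≤ n - 1)
  have hab' : (3 : ℝ) ≤ a + b := by exact_mod_cast hab
  set K := (m ^ 2 / (2 * (m - 1))) ^ 3
  have hm : 1 < m := by linarith
  have hK : 0 < K := pow_pos (div_pos (pow_pos (by linarith) 2) (by linarith)) 3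
  have hf : ((a : ℝ) * b / (a + b - 2)) ^ 3 ≤ K :=
    pow_le_pow_left₀ (div_nonneg (by positivity) (by linarith))
      (natCast_mul_div_add_sub_two_le ha hb hab ham hbm) 3
  rw [show (n : ℝ) - 2 = m - 1 by ring, sqrt_pow_thirteen_div_eq, mul_assoc, ← div_eq_mul_one_div,
    ← Real.sqrt_div' _ (by linarith)]
  refine le_and_eq_iff_of_lt_of_eq (fun hne => ?_) ?_
  · have hs : ((a + b + 2 : ℕ) : ℝ) < ((2 * n : ℕ) : ℝ) := by
      exact_mod_cast (by omega : a + b + 2 < 2 * n)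
    push_cast at hs
    have h1 : 1 < √(2 * m / (a + b)) := by
      rw [Real.lt_sqrt zero_le_one, one_pow, one_lt_div (by linarith)]
      linarith
    calc ((a : ℝ) * b / (a + b - 2)) ^ 3 ≤ K := hf
      _ < K * √(2 * m / (a + b)) := lt_mul_of_one_lt_right hK h1
  · rintro ⟨rfl, rfl⟩
    rw [cast_pred, ← two_mul, div_self (mul_pos two_pos (by linarith)).ne', Real.sqrt_one, mul_one]
    ring

namespace SimpleGraph

omit [DecidableEq V]

section Connectivity

variable {G : SimpleGraph V}

omit [Fintype V] in
lemma Preconnected.mem_of_adj_closed (hG : G.Preconnected) {S : Set V}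
    (hS : ∀ ⦃a b⦄, G.Adj a b → a ∈ S → b ∈ S) {u : V} (hu : u ∈ S) (v : V) : v ∈ S := by
  obtain ⟨p⟩ := hG u v
  induction p with
  | nil => exact hu
  | cons hadj _ ih => exact ih (hS hadj hu)

omit [Fintype V] in
lemma Preconnected.eq_starGraph (hG : G.Preconnected) {u : V}
    (hleaf : ∀ ⦃w x⦄, G.Adj u w → G.Adj w x → x = u) : G = starGraph u := by
  have huniv : ∀ w, w ≠ u → G.Adj u w := fun w hw =>
    (hG.mem_of_adj_closed (S := {z | z = u ∨ G.Adj u z}) (fun a b hab => by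
      rintro (rfl | hua)
      exacts [Or.inr hab, Or.inl (hleaf hua hab)]) (Or.inl rfl) w).resolve_left hw
  ext a b
  rw [starGraph_adj]
  refine ⟨fun hab => ⟨hab.ne, ?_⟩, fun ⟨hne, hab⟩ => ?_⟩
  · by_contra! hau
    exact hau.2 (hleaf (huniv a hau.1) hab)
  · rcases hab with rfl | rfl
    exacts [huniv b (Ne.symm hne), (huniv a hne).symm]

variable [DecidableRel G.Adj]

lemma eq_of_adj_of_degree_eq_one {u v w : V} (h : G.degree u = 1) (huv : G.Adj u v)
    (huw : G.Adj u w) : v = w := by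
  obtain ⟨x, -, hx⟩ := degree_eq_one_iff_existsUnique_adj.1 h
  exact (hx v huv).trans (hx w huw).symm

lemma Preconnected.three_le_degree_add_degree (hG : G.Preconnected) (hV : 3 ≤ Fintype.card V)
    {u v : V} (huv : G.Adj u v) : 3 ≤ G.degree u + G.degree v := by
  classical
  by_contra! hlt
  have hu_pos := huv.degree_pos_left
  have hv_pos := huv.degree_pos_right
  have hu : G.degree u = 1 := by omega
  have hv : G.degree v = 1 := by omega
  have hS : ∀ z, z ∈ ({u, v} : Set V) := hG.mem_of_adj_closed (u := u) (by
    rintro a b hab (rfl | rfl)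
    · exact Or.inr (eq_of_adj_of_degree_eq_one hu hab huv)
    · exact Or.inl (eq_of_adj_of_degree_eq_one hv hab huv.symm)) (Or.inl rfl)
  have : Fintype.card V ≤ 2 := by
    calc Fintype.card V = #(univ : Finset V) := rfl
      _ ≤ #{u, v} := card_le_card fun z _ => by simpa using hS z
      _ ≤ 2 := card_le_two
  omega

end Connectivity

section Iso

variable {G : SimpleGraph V} [DecidableRel G.Adj] {W : Type*} [Fintype W] {H : SimpleGraph W}
  [DecidableRel H.Adj]

lemma Iso.forall_adj_degree_iff (f : G ≃g H) (P : ℕ → ℕ → Prop) :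
    (∀ u v, G.Adj u v → P (G.degree u) (G.degree v)) ↔
      ∀ x y, H.Adj x y → P (H.degree x) (H.degree y) := by
  refine ⟨fun h x y hxy => ?_, fun h u v huv => ?_⟩
  · have := h (f.symm x) (f.symm y) (f.symm.map_adj_iff.2 hxy)
    rwa [← f.degree_eq, ← f.degree_eq, f.apply_symm_apply, f.apply_symm_apply] at this
  · simpa using h (f u) (f v) (f.map_adj_iff.2 huv)

end Iso

lemma completeBipartiteGraph_fin_one (W : Type*) :
    completeBipartiteGraph (Fin 1) W = starGraph (Sum.inl 0) := by
  ext (x | x) (y | y) <;> simp [Fin.fin_one_eq_zero]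

def Iso.starGraph {W : Type*} (e : V ≃ W) {r : V} {s : W} (h : e r = s) :
    starGraph r ≃g starGraph s :=
  ⟨e, by simp [starGraph_adj, ← h, e.injective.eq_iff]⟩

section Characterizations

variable {G : SimpleGraph V} [DecidableRel G.Adj]

lemma Connected.forall_adj_degree_iff_nonempty_iso_star [Nontrivial V] (hG : G.Connected)
    (k : ℕ) :
    (∀ u v, G.Adj u v → (G.degree u = 1 ∧ G.degree v = k) ∨ (G.degree u = k ∧ G.degree v = 1)) ↔
      Nonempty (G ≃g completeBipartiteGraph (Fin 1) (Fin k)) := by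
  rw [completeBipartiteGraph_fin_one]
  refine ⟨fun h => ?_, fun ⟨f⟩ => ?_⟩
  · obtain ⟨v₀⟩ := ‹Nontrivial V›.to_nonempty
    obtain ⟨w₀, h₀⟩ :=
      (G.degree_pos_iff_exists_adj v₀).1 (hG.preconnected.degree_pos_of_nontrivial v₀)
    obtain ⟨u, hu⟩ : ∃ u, G.degree u = k := by
      rcases h _ _ h₀ with ⟨-, h⟩ | ⟨h, -⟩
      exacts [⟨w₀, h⟩, ⟨v₀, h⟩]
    have hG_eq : G = starGraph u := hG.preconnected.eq_starGraph fun w x huw hwx =>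
      eq_of_adj_of_degree_eq_one (by rcases h u w huw with h' | h' <;> omega) hwx huw.symm
    have hcard : Fintype.card V = Fintype.card (Fin 1 ⊕ Fin k) := by
      have := (G.degree_eq_card_sub_one u).2 (hG_eq ▸ isUniversal_starGraph_self)
      have := Fintype.card_pos (α := V)
      simp only [Fintype.card_sum, Fintype.card_fin]
      omega
    obtain ⟨e⟩ := Fintype.card_eq.1 hcard
    subst hG_eq
    exact ⟨Iso.starGraph (e.trans (Equiv.swap (e u) (Sum.inl 0))) (Equiv.swap_apply_left _ _)⟩
  · rw [f.forall_adj_degree_iff (fun a b => (a = 1 ∧ b = k) ∨ (a = k ∧ b = 1))]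
    rintro x y hxy
    rw [starGraph_adj] at hxy
    have hcenter : (starGraph (Sum.inl 0 : Fin 1 ⊕ Fin k)).degree (Sum.inl 0) = k := by
      rw [degree_starGraph_center, Fintype.card_sum, Fintype.card_fin, Fintype.card_fin,
        Nat.add_sub_cancel_left]
    rcases hxy with ⟨hne, rfl | rfl⟩
    · exact Or.inr ⟨hcenter, degree_starGraph_of_ne_center (Ne.symm hne)⟩
    · exact Or.inl ⟨degree_starGraph_of_ne_center hne, hcenter⟩

lemma Preconnected.forall_adj_degree_iff_nonempty_iso_completeGraph [Nontrivial V]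
    (hG : G.Preconnected) {n : ℕ} (hn : Fintype.card V = n) :
    (∀ u v, G.Adj u v → G.degree u = n - 1 ∧ G.degree v = n - 1) ↔
      Nonempty (G ≃g completeGraph (Fin n)) := by
  refine ⟨fun h => ?_, fun ⟨f⟩ => ?_⟩
  · have hG_eq : G = ⊤ := eq_top_iff_forall_isUniversal.2 fun v => by
      obtain ⟨w, hvw⟩ := (G.degree_pos_iff_exists_adj v).1 (hG.degree_pos_of_nontrivial v)
      exact (G.degree_eq_card_sub_one v).1 (hn ▸ (h v w hvw).1)
    subst hG_eq
    exact ⟨Iso.completeGraph (Fintype.equivFinOfCardEq hn)⟩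
  · rw [f.forall_adj_degree_iff (fun a b => a = n - 1 ∧ b = n - 1)]
    simp

end Characterizations

section EdgeSums

variable (G : SimpleGraph V) [DecidableRel G.Adj]

lemma sum_edgeFinset_le_and_eq_iff {f g : Sym2 V → ℝ} {P : V → V → Prop}
    (h : ∀ u v, G.Adj u v → f s(u, v) ≤ g s(u, v) ∧ (f s(u, v) = g s(u, v) ↔ P u v)) :
    ∑ e ∈ G.edgeFinset, f e ≤ ∑ e ∈ G.edgeFinset, g e ∧
      (∑ e ∈ G.edgeFinset, f e = ∑ e ∈ G.edgeFinset, g e ↔ ∀ u v, G.Adj u v → P u v) := by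
  have hle : ∀ e ∈ G.edgeFinset, f e ≤ g e := by
    intro e
    induction e using Sym2.ind with
    | _ u v => exact fun he => (h u v (mem_edgeFinset.1 he)).1
  refine ⟨sum_le_sum hle, (sum_eq_sum_iff_of_le hle).trans ⟨fun H u v huv => ?_, fun H e => ?_⟩⟩
  · exact (h u v huv).2.1 (H _ (mem_edgeFinset.2 huv))
  · induction e using Sym2.ind with
    | _ u v => exact fun he => (h u v (mem_edgeFinset.1 he)).2.2 (H u v (mem_edgeFinset.1 he))

end EdgeSums

end SimpleGraph

section IndexComparison

omit [DecidableEq V]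

variable (G : SimpleGraph V) [DecidableRel G.Adj]

lemma mul_sumConnIndex_le_augZagrebIndex_and_eq_iff {c : ℝ} {P : V → V → Prop}
    (h : ∀ u v, G.Adj u v →
      c * (1 / √((G.degree u : ℝ) + G.degree v)) ≤
        ((G.degree u : ℝ) * G.degree v / (G.degree u + G.degree v - 2)) ^ 3 ∧
      (c * (1 / √((G.degree u : ℝ) + G.degree v)) =
        ((G.degree u : ℝ) * G.degree v / (G.degree u + G.degree v - 2)) ^ 3 ↔ P u v)) :
    c * sumConnIndex G ≤ augZagrebIndex G ∧
      (c * sumConnIndex G = augZagrebIndex G ↔ ∀ u v, G.Adj u v → P u v) := by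
  rw [sumConnIndex, augZagrebIndex, mul_sum]
  exact G.sum_edgeFinset_le_and_eq_iff h

lemma augZagrebIndex_le_mul_sumConnIndex_and_eq_iff {c : ℝ} {P : V → V → Prop}
    (h : ∀ u v, G.Adj u v →
      ((G.degree u : ℝ) * G.degree v / (G.degree u + G.degree v - 2)) ^ 3 ≤
        c * (1 / √((G.degree u : ℝ) + G.degree v)) ∧
      (((G.degree u : ℝ) * G.degree v / (G.degree u + G.degree v - 2)) ^ 3 =
        c * (1 / √((G.degree u : ℝ) + G.degree v)) ↔ P u v)) :
    augZagrebIndex G ≤ c * sumConnIndex G ∧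
      (augZagrebIndex G = c * sumConnIndex G ↔ ∀ u v, G.Adj u v → P u v) := by
  rw [sumConnIndex, augZagrebIndex, mul_sum]
  exact G.sum_edgeFinset_le_and_eq_iff h

end IndexComparison

variable (G : SimpleGraph V) [DecidableRel G.Adj]

theorem stmt15 (hG : G.Connected) (n : ℕ) (hn : Fintype.card V = n) (hn3 : 3 ≤ n) :
    (1536 / 343 : ℝ) * sumConnIndex G ≤ augZagrebIndex G ∧
    augZagrebIndex G ≤
      Real.sqrt (((n : ℝ) - 1) ^ 13) / (Real.sqrt 32 * ((n : ℝ) - 2) ^ 3) * sumConnIndex G ∧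
    ((1536 / 343 : ℝ) * sumConnIndex G = augZagrebIndex G ↔
      Nonempty (G ≃g completeBipartiteGraph (Fin 1) (Fin 8))) ∧
    (augZagrebIndex G =
        Real.sqrt (((n : ℝ) - 1) ^ 13) / (Real.sqrt 32 * ((n : ℝ) - 2) ^ 3) * sumConnIndex G ↔
      Nonempty (G ≃g completeGraph (Fin n))) := by
  have hV : 3 ≤ Fintype.card V := hn ▸ hn3
  have : Nontrivial V := Fintype.one_lt_card_iff_nontrivial.1 (by omega)
  have hdeg : ∀ ⦃u v⦄, G.Adj u v →
      1 ≤ G.degree u ∧ 1 ≤ G.degree v ∧ 3 ≤ G.degree u + G.degree v :=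
    fun u v huv => ⟨huv.degree_pos_left, huv.degree_pos_right,
      hG.preconnected.three_le_degree_add_degree hV huv⟩
  have hlt : ∀ v, G.degree v < n := fun v => hn ▸ G.degree_lt_card_verts v
  obtain ⟨hlo, hlo_eq⟩ := mul_sumConnIndex_le_augZagrebIndex_and_eq_iff G fun u v huv =>
    lower_edge_le_and_eq_iff (hdeg huv).1 (hdeg huv).2.1 (hdeg huv).2.2
  obtain ⟨hhi, hhi_eq⟩ := augZagrebIndex_le_mul_sumConnIndex_and_eq_iff G fun u v huv =>
    upper_edge_le_and_eq_iff (hdeg huv).1 (hdeg huv).2.1 (hdeg huv).2.2 (hlt u) (hlt v)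
  exact ⟨hlo, hhi, hlo_eq.trans (hG.forall_adj_degree_iff_nonempty_iso_star 8),
    hhi_eq.trans (hG.preconnected.forall_adj_degree_iff_nonempty_iso_completeGraph hn)⟩
end

section
/- Let G be a connected simple graph with n ≥ 3 vertices and minimum degree δ ≥ 2. Then 8 · GA(G) ≤ AZI(G) ≤ ((n−1)⁶/(8(n−2)³)) · GA(G), with equality on the left if and only if G is isomorphic to the cycle Cₙ, and equality on the right if and only if G is isomorphic to the complete graph Kₙ. -/
open Finset SimpleGraph

variable {V : Type*} [Fintype V] [DecidableEq V]

/-!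
The AZI term of an edge `uv` equals `aziGaRatio d_u d_v` times its GA term, and on `[2, ∞)²` the
function `aziGaRatio` increases in each variable (its square factors as
`y⁵ (x / (x + y - 2))⁵ · (x + y)² / (x + y - 2) / 4`, both factors increasing in `x`). Hence
`8 = aziGaRatio 2 2 ≤ aziGaRatio d_u d_v ≤ aziGaRatio (n - 1) (n - 1)` on every edge, and
summing gives both bounds. Equality forces every vertex to have degree `2`, resp. `n - 1`: a
connected `2`-regular graph is covered by one cycle, hence is `Cₙ`, and an `(n - 1)`-regular
graph is `Kₙ`.
-/

noncomputable def aziGaRatio (x y : ℝ) : ℝ := √(x * y) ^ 5 * (x + y) / (2 * (x + y - 2) ^ 3)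

lemma aziGaRatio_comm (x y : ℝ) : aziGaRatio x y = aziGaRatio y x := by
  rw [aziGaRatio, aziGaRatio, mul_comm x, add_comm x]

lemma aziGaRatio_nonneg {x y : ℝ} (hs : 2 ≤ x + y) : 0 ≤ aziGaRatio x y := by
  have : 0 ≤ x + y - 2 := by linarith
  unfold aziGaRatio
  positivity

lemma aziGaRatio_sq {x y : ℝ} (hxy : 0 ≤ x * y) :
    aziGaRatio x y ^ 2 = y ^ 5 * (x / (x + y - 2)) ^ 5 * ((x + y) ^ 2 / (x + y - 2)) / 4 := by
  have h : √(x * y) ^ 10 = (x * y) ^ 5 := by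
    rw [show 10 = 2 * 5 by rfl, pow_mul, Real.sq_sqrt hxy]
  rw [aziGaRatio, div_pow, mul_pow, ← pow_mul, h]
  generalize x + y - 2 = s
  ring

lemma aziGaRatio_two_two : aziGaRatio 2 2 = 8 := by
  have : √((2 : ℝ) * 2) = 2 := by rw [Real.sqrt_mul_self zero_le_two]
  rw [aziGaRatio, this]
  norm_num

lemma aziGaRatio_self {m : ℝ} (hm : 0 ≤ m) : aziGaRatio m m = m ^ 6 / (8 * (m - 1) ^ 3) := by
  rw [aziGaRatio, Real.sqrt_mul_self hm, show m + m - 2 = 2 * (m - 1) by ring]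
  generalize m - 1 = s
  ring

lemma augZagrebTerm_eq_aziGaRatio_mul {x y : ℝ} (hxy : 0 ≤ x * y) (hs : x + y ≠ 0) :
    (x * y / (x + y - 2)) ^ 3 = aziGaRatio x y * (2 * √(x * y) / (x + y)) := by
  have h : √(x * y) ^ 6 = (x * y) ^ 3 := by rw [show 6 = 2 * 3 by rfl, pow_mul, Real.sq_sqrt hxy]
  rw [aziGaRatio, div_pow, ← h]
  field_simp

lemma strictMonoOn_sq_add_two_div : StrictMonoOn (fun t : ℝ => (t + 2) ^ 2 / t) (Set.Ici 2) := by
  intro s (hs : 2 ≤ s) t (ht : 2 ≤ t) hst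
  rw [div_lt_div_iff₀ (by linarith) (by linarith)]
  -- `(t + 2) ^ 2 * s - (s + 2) ^ 2 * t = (t - s) * (s * t - 4)`
  nlinarith [mul_pos (sub_pos.mpr hst) (by nlinarith : (0:ℝ) < s * t - 4)]

lemma aziGaRatio_lt_left {x x' y : ℝ} (hx : 2 ≤ x) (hy : 2 ≤ y) (h : x < x') :
    aziGaRatio x y < aziGaRatio x' y := by
  have hs : 0 < x + y - 2 := by linarith
  have hs' : 0 < x' + y - 2 := by linarith
  have hfrac : x / (x + y - 2) ≤ x' / (x' + y - 2) := by
    rw [div_le_div_iff₀ hs hs']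
    nlinarith
  have hg : (x + y) ^ 2 / (x + y - 2) < (x' + y) ^ 2 / (x' + y - 2) := by
    simpa using strictMonoOn_sq_add_two_div (a := x + y - 2) (b := x' + y - 2)
      (Set.mem_Ici.mpr (by linarith)) (Set.mem_Ici.mpr (by linarith)) (by linarith)
  have hsq : aziGaRatio x y ^ 2 < aziGaRatio x' y ^ 2 := by
    rw [aziGaRatio_sq (by positivity), aziGaRatio_sq (by nlinarith)]
    have hpow : (x / (x + y - 2)) ^ 5 ≤ (x' / (x' + y - 2)) ^ 5 :=
      pow_le_pow_left₀ (by positivity) hfrac 5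
    gcongr ?_ / 4
    rw [mul_assoc, mul_assoc]
    gcongr y ^ 5 * ?_
    exact mul_lt_mul' hpow hg (div_nonneg (by positivity) hs.le)
      (pow_pos (div_pos (by linarith) hs') 5)
  exact (pow_lt_pow_iff_left₀ (aziGaRatio_nonneg (by linarith))
    (aziGaRatio_nonneg (by linarith)) two_ne_zero).mp hsq

lemma aziGaRatio_le_aziGaRatio {x x' y y' : ℝ} (hx : 2 ≤ x) (hy : 2 ≤ y) (hxx : x ≤ x')
    (hyy : y ≤ y') : aziGaRatio x y ≤ aziGaRatio x' y' := by
  have hleft : ∀ {a a' b : ℝ}, 2 ≤ a → 2 ≤ b → a ≤ a' →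
      aziGaRatio a b ≤ aziGaRatio a' b :=
    fun ha hb haa => haa.eq_or_lt.elim (fun h => h ▸ le_rfl)
      fun h => (aziGaRatio_lt_left ha hb h).le
  calc aziGaRatio x y ≤ aziGaRatio x' y := hleft hx hy hxx
    _ = aziGaRatio y x' := aziGaRatio_comm _ _
    _ ≤ aziGaRatio y' x' := hleft hy (hx.trans hxx) hyy
    _ = aziGaRatio x' y' := aziGaRatio_comm _ _

lemma aziGaRatio_self_lt {a x y : ℝ} (ha : 2 ≤ a) (hx : a < x) (hy : a ≤ y) :
    aziGaRatio a a < aziGaRatio x y :=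
  (aziGaRatio_lt_left ha ha hx).trans_le (aziGaRatio_le_aziGaRatio (ha.trans hx.le) ha le_rfl hy)

lemma aziGaRatio_lt_self {a x y : ℝ} (hx : 2 ≤ x) (hy : 2 ≤ y) (hxa : x < a) (hya : y ≤ a) :
    aziGaRatio x y < aziGaRatio a a :=
  (aziGaRatio_lt_left hx hy hxa).trans_le (aziGaRatio_le_aziGaRatio (hx.trans hxa.le) hy le_rfl hya)

namespace SimpleGraph

lemma sum_edgeFinset_le_sum_edgeFinset {W : Type*} [Fintype W] {H : SimpleGraph W}
    [DecidableRel H.Adj] {f g : Sym2 W → ℝ}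
    (h : ∀ ⦃u v⦄, H.Adj u v → f s(u, v) ≤ g s(u, v)) :
    ∑ e ∈ H.edgeFinset, f e ≤ ∑ e ∈ H.edgeFinset, g e ∧
      (∑ e ∈ H.edgeFinset, f e = ∑ e ∈ H.edgeFinset, g e ↔
        ∀ ⦃u v⦄, H.Adj u v → f s(u, v) = g s(u, v)) := by
  have hforall : ∀ {p : Sym2 W → Prop},
      (∀ e ∈ H.edgeFinset, p e) ↔ ∀ ⦃u v⦄, H.Adj u v → p s(u, v) := by
    simp [Sym2.forall]
  have hle : ∀ e ∈ H.edgeFinset, f e ≤ g e := hforall.mpr h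
  exact ⟨sum_le_sum hle, (sum_eq_sum_iff_of_le hle).trans hforall⟩

section

variable {W : Type*} [Fintype W] (G : SimpleGraph W) [DecidableRel G.Adj]

lemma exists_adj_of_two_le_degree (hδ : ∀ v, 2 ≤ (G.degree v : ℝ)) (v : W) :
    ∃ u, G.Adj v u :=
  (G.degree_pos_iff_exists_adj v).mp (by exact_mod_cast (zero_lt_two.trans_le (hδ v)))

lemma degree_augZagrebTerm_eq (hδ : ∀ v, 2 ≤ (G.degree v : ℝ)) (u v : W) :
    ((G.degree u : ℝ) * G.degree v / (G.degree u + G.degree v - 2)) ^ 3 =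
      aziGaRatio (G.degree u) (G.degree v) *
        (2 * √((G.degree u : ℝ) * G.degree v) / (G.degree u + G.degree v)) :=
  augZagrebTerm_eq_aziGaRatio_mul (by positivity) (by linarith [hδ u, hδ v])

lemma degree_geoArithTerm_pos (hδ : ∀ v, 2 ≤ (G.degree v : ℝ)) (u v : W) :
    0 < 2 * √((G.degree u : ℝ) * G.degree v) / (G.degree u + G.degree v) := by
  have hu := hδ u
  have hv := hδ v
  have : 0 < √((G.degree u : ℝ) * G.degree v) := Real.sqrt_pos.mpr (by positivity)
  positivity

theorem aziGaRatio_mul_geoArithIndex_le_augZagrebIndex {a : ℝ} (ha : 2 ≤ a)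
    (hdeg : ∀ v, a ≤ (G.degree v : ℝ)) :
    aziGaRatio a a * geoArithIndex G ≤ augZagrebIndex G ∧
      (aziGaRatio a a * geoArithIndex G = augZagrebIndex G ↔ ∀ v, (G.degree v : ℝ) = a) := by
  have hδ v : 2 ≤ (G.degree v : ℝ) := ha.trans (hdeg v)
  have hratio u v : aziGaRatio a a ≤ aziGaRatio (G.degree u) (G.degree v) :=
    aziGaRatio_le_aziGaRatio ha ha (hdeg u) (hdeg v)
  rw [geoArithIndex, augZagrebIndex, mul_sum]
  refine (sum_edgeFinset_le_sum_edgeFinset fun u v _ => ?_).imp_right fun hiff => hiff.trans ?_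
  · simp only [Sym2.lift_mk]
    rw [degree_augZagrebTerm_eq G hδ]
    exact mul_le_mul_of_nonneg_right (hratio u v) (G.degree_geoArithTerm_pos hδ u v).le
  · simp only [Sym2.lift_mk, degree_augZagrebTerm_eq G hδ,
      mul_left_inj' (G.degree_geoArithTerm_pos hδ _ _).ne']
    refine ⟨fun h v => ?_, fun h u v _ => by rw [h u, h v]⟩
    obtain ⟨u, hvu⟩ := G.exists_adj_of_two_le_degree hδ v
    by_contra hne
    exact (aziGaRatio_self_lt ha (lt_of_le_of_ne (hdeg v) (Ne.symm hne)) (hdeg u)).ne (h hvu)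

theorem augZagrebIndex_le_aziGaRatio_mul_geoArithIndex (hδ : ∀ v, 2 ≤ (G.degree v : ℝ))
    {b : ℝ} (hdeg : ∀ v, (G.degree v : ℝ) ≤ b) :
    augZagrebIndex G ≤ aziGaRatio b b * geoArithIndex G ∧
      (augZagrebIndex G = aziGaRatio b b * geoArithIndex G ↔ ∀ v, (G.degree v : ℝ) = b) := by
  have hratio u v : aziGaRatio (G.degree u) (G.degree v) ≤ aziGaRatio b b :=
    aziGaRatio_le_aziGaRatio (hδ u) (hδ v) (hdeg u) (hdeg v)
  rw [geoArithIndex, augZagrebIndex, mul_sum]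
  refine (sum_edgeFinset_le_sum_edgeFinset fun u v _ => ?_).imp_right fun hiff => hiff.trans ?_
  · simp only [Sym2.lift_mk]
    rw [degree_augZagrebTerm_eq G hδ]
    exact mul_le_mul_of_nonneg_right (hratio u v) (G.degree_geoArithTerm_pos hδ u v).le
  · simp only [Sym2.lift_mk, degree_augZagrebTerm_eq G hδ,
      mul_left_inj' (G.degree_geoArithTerm_pos hδ _ _).ne']
    refine ⟨fun h v => ?_, fun h u v _ => by rw [h u, h v]⟩
    obtain ⟨u, hvu⟩ := G.exists_adj_of_two_le_degree hδ v
    by_contra hne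
    exact (aziGaRatio_lt_self (hδ v) (hδ u) (lt_of_le_of_ne (hdeg v) hne) (hdeg u)).ne (h hvu)

end

lemma Walk.IsCycle.isHamiltonianCycle_of_forall_mem_support {α : Type*} [DecidableEq α]
    {G : SimpleGraph α} {v : α} {p : G.Walk v v}
    (hp : p.IsCycle) (hsupp : ∀ w, w ∈ p.support) : p.IsHamiltonianCycle := by
  refine ⟨hp, hp.isPath_tail.isHamiltonian_of_mem fun w => ?_⟩
  rw [p.support_tail_of_not_nil hp.not_nil]
  rcases p.mem_support_iff.mp (hsupp w) with rfl | h
  exacts [p.end_mem_tail_support hp.not_nil, h]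

variable {α β : Type*} [Fintype α] [Fintype β]

lemma Copy.adj_iff_of_degree_eq {A : SimpleGraph α} {B : SimpleGraph β} [DecidableRel A.Adj]
    [DecidableRel B.Adj] (f : Copy A B) {a : α} (hdeg : B.degree (f a) = A.degree a) (a' : α) :
    B.Adj (f a) (f a') ↔ A.Adj a a' := by
  refine ⟨fun h => ?_, f.toHom.map_adj⟩
  have hbij : Function.Bijective (f.mapNeighborSet a) := by
    rw [Fintype.bijective_iff_injective_and_card, card_neighborSet_eq_degree,
      card_neighborSet_eq_degree, hdeg]
    exact ⟨(f.mapNeighborSet a).injective, rfl⟩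
  obtain ⟨⟨b, hb⟩, hfb⟩ := hbij.surjective ⟨f a', h⟩
  obtain rfl : b = a' := f.injective (congrArg Subtype.val hfb)
  exact hb

lemma Copy.nonempty_iso_of_bijective {A : SimpleGraph α} {B : SimpleGraph β} [DecidableRel A.Adj]
    [DecidableRel B.Adj] (f : Copy A B) (hf : Function.Bijective f)
    (hdeg : ∀ a, B.degree (f a) = A.degree a) : Nonempty (A ≃g B) :=
  ⟨⟨Equiv.ofBijective f hf, fun {a a'} => f.adj_iff_of_degree_eq (hdeg a) a'⟩⟩

variable {G : SimpleGraph α} [DecidableRel G.Adj]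

theorem nonempty_iso_cycleGraph_iff (hG : G.Connected) {n : ℕ}
    (hn : Fintype.card α = n) (hn3 : 3 ≤ n) :
    Nonempty (G ≃g cycleGraph n) ↔ ∀ v, G.degree v = 2 := by
  classical
  obtain ⟨m, rfl⟩ : ∃ m, n = m + 3 := ⟨n - 3, by omega⟩
  refine ⟨fun ⟨f⟩ v => by rw [← f.degree_eq, cycleGraph_degree_three_le], fun hdeg => ?_⟩
  have hcyc : G.IsCycles := fun v _ => by
    rw [Set.ncard_eq_toFinset_card', ← neighborFinset_def, card_neighborFinset_eq_degree, hdeg]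
  obtain ⟨v⟩ := hG.nonempty
  have hnbr : (G.neighborSet v).Nonempty :=
    (G.degree_pos_iff_exists_adj v).mp (by rw [hdeg]; norm_num)
  obtain ⟨p, hp, hverts⟩ := hcyc.exists_cycle_toSubgraph_verts_eq_connectedComponentSupp
    (c := G.connectedComponentMk v) rfl hnbr
  have hham : p.IsHamiltonianCycle := hp.isHamiltonianCycle_of_forall_mem_support fun w => by
    have : w ∈ (G.connectedComponentMk v).supp := by
      rw [ConnectedComponent.mem_supp_iff, ConnectedComponent.eq]
      exact hG.preconnected w v
    rwa [← hverts, Walk.verts_toSubgraph] at this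
  obtain ⟨f⟩ :=
    (cycleGraph_isContained_iff (by omega)).mpr ⟨v, p, hp, hham.length_eq.trans hn⟩
  refine Nonempty.map Iso.symm (f.nonempty_iso_of_bijective ?_ fun a => ?_)
  · rw [Fintype.bijective_iff_injective_and_card, hn, Fintype.card_fin]
    exact ⟨f.injective, rfl⟩
  · rw [hdeg, cycleGraph_degree_three_le]

theorem nonempty_iso_completeGraph_iff {n : ℕ} (hn : Fintype.card α = n) :
    Nonempty (G ≃g completeGraph (Fin n)) ↔ ∀ v, G.degree v = n - 1 := by
  classical
  refine ⟨fun ⟨f⟩ v => ?_, fun hdeg => ?_⟩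
  · rw [← f.degree_eq, complete_graph_degree, Fintype.card_fin]
  · obtain rfl : G = ⊤ := eq_top_iff_forall_isUniversal.mpr fun v =>
      (G.degree_eq_card_sub_one v).mp (hn ▸ hdeg v)
    exact ⟨Iso.completeGraph (Fintype.equivFinOfCardEq hn)⟩

end SimpleGraph

variable (G : SimpleGraph V) [DecidableRel G.Adj]

theorem stmt19 (hG : G.Connected) (n : ℕ) (hn : Fintype.card V = n) (hn3 : 3 ≤ n)
    (hδ : 2 ≤ G.minDegree) :
    8 * geoArithIndex G ≤ augZagrebIndex G ∧
    augZagrebIndex G ≤ ((n : ℝ) - 1) ^ 6 / (8 * ((n : ℝ) - 2) ^ 3) * geoArithIndex G ∧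
    (8 * geoArithIndex G = augZagrebIndex G ↔ Nonempty (G ≃g cycleGraph n)) ∧
    (augZagrebIndex G = ((n : ℝ) - 1) ^ 6 / (8 * ((n : ℝ) - 2) ^ 3) * geoArithIndex G ↔
      Nonempty (G ≃g completeGraph (Fin n))) := by
  have hlo v : (2 : ℝ) ≤ G.degree v := by exact_mod_cast hδ.trans (G.minDegree_le_degree v)
  have hcast : ((n - 1 : ℕ) : ℝ) = n - 1 := by rw [Nat.cast_sub (by omega), Nat.cast_one]
  have hhi v : (G.degree v : ℝ) ≤ n - 1 := by
    rw [← hcast]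
    exact_mod_cast Nat.le_sub_one_of_lt (hn ▸ G.degree_lt_card_verts v)
  have hC : aziGaRatio (n - 1) (n - 1) = ((n : ℝ) - 1) ^ 6 / (8 * ((n : ℝ) - 2) ^ 3) := by
    have : (3 : ℝ) ≤ n := by exact_mod_cast hn3
    rw [aziGaRatio_self (by linarith)]
    ring
  obtain ⟨hlow, hlow_eq⟩ := G.aziGaRatio_mul_geoArithIndex_le_augZagrebIndex le_rfl hlo
  obtain ⟨hup, hup_eq⟩ := G.augZagrebIndex_le_aziGaRatio_mul_geoArithIndex hlo hhi
  rw [aziGaRatio_two_two] at hlow hlow_eq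
  rw [hC] at hup hup_eq
  refine ⟨hlow, hup, hlow_eq.trans ?_, hup_eq.trans ?_⟩
  · rw [nonempty_iso_cycleGraph_iff hG hn hn3]
    exact forall_congr' fun v => by norm_cast
  · rw [nonempty_iso_completeGraph_iff hn]
    exact forall_congr' fun v => by rw [← hcast]; norm_cast
end
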